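/- For any p ≥ 2 and any vectors x, y in ℝ^d, one has (x - y) · (|x|^{p-2} x - |y|^{p-2} y) ≥ 2^{2-p} |x-y|^p, and in particular this quantity is nonnegative. -/

import Mathlib

/-!
Write `a = ‖x‖`, `b = ‖y‖`, `u = ‖x - y‖` and `P = a ^ (p - 2)`, `Q = b ^ (p - 2)`. Polarization gives
`2 ⟪x - y, P x - Q y⟫ = (P + Q) u² + (P - Q)(a² - b²)`, whose second term is nonnegative because
`t ↦ t ^ (p - 2)` is monotone. The right-hand side is an affine function of `u²` with nonnegative
value at `u = 0`; at the extreme value `u = a + b` it equals `2 (a ^ (p - 1) + b ^ (p - 1)) (a + b)`,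
which dominates `2 · 2 ^ (2 - p) (a + b) ^ p` by convexity of `t ↦ t ^ (p - 1)`. Since `u ≤ a + b`,
`u ^ p ≤ (a + b) ^ (p - 2) u²`, and interpolating between the two ends gives the bound.
-/

open scoped InnerProductSpace

namespace Real

theorem rpow_add_le_mul_rpow_add_rpow {a b q : ℝ} (ha : 0 ≤ a) (hb : 0 ≤ b) (hq : 1 ≤ q) :
    (a + b) ^ q ≤ 2 ^ (q - 1) * (a ^ q + b ^ q) := by
  lift a to NNReal using ha
  lift b to NNReal using hb
  exact_mod_cast NNReal.rpow_add_le_mul_rpow_add_rpow a b hq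

theorem rpow_sub_two_mul_sq {a p : ℝ} (ha : 0 ≤ a) (hp : 2 ≤ p) :
    a ^ (p - 2) * a ^ 2 = a ^ p := by
  rw [← rpow_two, ← rpow_add' ha (by linarith), sub_add_cancel]

theorem rpow_sub_two_mul_self {a p : ℝ} (ha : 0 ≤ a) (hp : 2 ≤ p) :
    a ^ (p - 2) * a = a ^ (p - 1) := by
  rw [← rpow_add_one' ha (by linarith)]
  ring_nf

end Real

open Real

theorem two_mul_inner_sub_smul_sub_smul {E : Type*} [NormedAddCommGroup E] [InnerProductSpace ℝ E]
    (x y : E) (P Q : ℝ) :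
    2 * ⟪x - y, P • x - Q • y⟫_ℝ =
      (P + Q) * ‖x - y‖ ^ 2 + (P - Q) * (‖x‖ ^ 2 - ‖y‖ ^ 2) := by
  rw [norm_sub_sq_real, inner_sub_left, inner_sub_right, inner_sub_right, real_inner_smul_right,
    real_inner_smul_right, real_inner_smul_right, real_inner_smul_right,
    real_inner_self_eq_norm_sq, real_inner_self_eq_norm_sq, real_inner_comm y x]
  ring

theorem rpow_sub_rpow_mul_sq_sub_sq_nonneg {a b r : ℝ} (ha : 0 ≤ a) (hb : 0 ≤ b) (hr : 0 ≤ r) :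
    0 ≤ (a ^ r - b ^ r) * (a ^ 2 - b ^ 2) := by
  rcases le_total a b with hab | hab
  · exact mul_nonneg_of_nonpos_of_nonpos (sub_nonpos.2 (rpow_le_rpow ha hab hr))
      (sub_nonpos.2 (pow_le_pow_left₀ ha hab 2))
  · exact mul_nonneg (sub_nonneg.2 (rpow_le_rpow hb hab hr))
      (sub_nonneg.2 (pow_le_pow_left₀ hb hab 2))

theorem two_rpow_two_sub_mul_add_rpow_le {a b p : ℝ} (ha : 0 ≤ a) (hb : 0 ≤ b) (hp : 2 ≤ p) :
    2 ^ (2 - p) * (a + b) ^ p ≤ (a ^ (p - 1) + b ^ (p - 1)) * (a + b) := by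
  have hconv := rpow_add_le_mul_rpow_add_rpow ha hb (by linarith : 1 ≤ p - 1)
  have hsplit : (a + b) ^ p = (a + b) ^ (p - 1) * (a + b) := by
    rw [← rpow_add_one' (by positivity) (by linarith), sub_add_cancel]
  have hcancel : (2 : ℝ) ^ (2 - p) * 2 ^ (p - 1 - 1) = 1 := by
    rw [← rpow_add two_pos, show 2 - p + (p - 1 - 1) = 0 by ring, rpow_zero]
  calc 2 ^ (2 - p) * (a + b) ^ p
      ≤ 2 ^ (2 - p) * (2 ^ (p - 1 - 1) * (a ^ (p - 1) + b ^ (p - 1)) * (a + b)) := by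
        rw [hsplit]; gcongr
    _ = (a ^ (p - 1) + b ^ (p - 1)) * (a + b) := by
        rw [← mul_assoc, ← mul_assoc, hcancel, one_mul]

theorem two_mul_two_rpow_two_sub_mul_rpow_le {a b u p : ℝ} (ha : 0 ≤ a) (hb : 0 ≤ b) (hu : 0 ≤ u)
    (hab : u ≤ a + b) (hp : 2 ≤ p) :
    2 * (2 ^ (2 - p) * u ^ p) ≤
      (a ^ (p - 2) + b ^ (p - 2)) * u ^ 2 + (a ^ (p - 2) - b ^ (p - 2)) * (a ^ 2 - b ^ 2) := by
  set A := a ^ (p - 2) + b ^ (p - 2)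
  set C := (a ^ (p - 2) - b ^ (p - 2)) * (a ^ 2 - b ^ 2)
  set B := 2 * 2 ^ (2 - p) * (a + b) ^ (p - 2)
  have hC : 0 ≤ C := rpow_sub_rpow_mul_sq_sub_sq_nonneg ha hb (by linarith)
  have hsq : u ^ 2 ≤ (a + b) ^ 2 := pow_le_pow_left₀ hu hab 2
  have hleft : 2 * (2 ^ (2 - p) * u ^ p) ≤ B * u ^ 2 := by
    rw [← rpow_sub_two_mul_sq hu hp]
    have hpow : u ^ (p - 2) ≤ (a + b) ^ (p - 2) := rpow_le_rpow hu hab (by linarith)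
    calc 2 * (2 ^ (2 - p) * (u ^ (p - 2) * u ^ 2))
        = 2 * 2 ^ (2 - p) * u ^ (p - 2) * u ^ 2 := by ring
      _ ≤ 2 * 2 ^ (2 - p) * (a + b) ^ (p - 2) * u ^ 2 := by gcongr
  have hend : B * (a + b) ^ 2 ≤ A * (a + b) ^ 2 + C := by
    have hB : B * (a + b) ^ 2 = 2 * (2 ^ (2 - p) * (a + b) ^ p) := by
      rw [mul_assoc _ ((a + b) ^ (p - 2)), rpow_sub_two_mul_sq (by positivity) hp, mul_assoc]
    have hAC : A * (a + b) ^ 2 + C = 2 * ((a ^ (p - 2) * a + b ^ (p - 2) * b) * (a + b)) := by ring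
    rw [hB, hAC, rpow_sub_two_mul_self ha hp, rpow_sub_two_mul_self hb hp]
    linarith [two_rpow_two_sub_mul_add_rpow_le ha hb hp]
  -- `s ↦ A s + C - B s` is affine, nonnegative at `s = 0` and at `s = (a + b)²`.
  have hmid : B * u ^ 2 ≤ A * u ^ 2 + C := by
    rcases le_total B A with hBA | hBA
    · nlinarith [sq_nonneg u]
    · nlinarith
  linarith

theorem two_rpow_two_sub_mul_norm_sub_rpow_le_inner {E : Type*} [NormedAddCommGroup E]
    [InnerProductSpace ℝ E] {p : ℝ} (hp : 2 ≤ p) (x y : E) :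
    2 ^ (2 - p) * ‖x - y‖ ^ p ≤ ⟪x - y, (‖x‖ ^ (p - 2)) • x - (‖y‖ ^ (p - 2)) • y⟫_ℝ := by
  have h := two_mul_two_rpow_two_sub_mul_rpow_le (norm_nonneg x) (norm_nonneg y)
    (norm_nonneg (x - y)) (norm_sub_le x y) hp
  rw [← two_mul_inner_sub_smul_sub_smul] at h
  linarith

theorem monotonicity_power_map (d : ℕ) (p : ℝ) (hp : 2 ≤ p)
    (x y : EuclideanSpace ℝ (Fin d)) :
    (2 : ℝ) ^ (2 - p) * ‖x - y‖ ^ p ≤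
      ⟪x - y, (‖x‖ ^ (p - 2)) • x - (‖y‖ ^ (p - 2)) • y⟫_ℝ ∧
    0 ≤ ⟪x - y, (‖x‖ ^ (p - 2)) • x - (‖y‖ ^ (p - 2)) • y⟫_ℝ := by
  have h := two_rpow_two_sub_mul_norm_sub_rpow_le_inner hp x y
  exact ⟨h, le_trans (by positivity) h⟩
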